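/- arXiv:1506.08897 — 2 statements merged into one kernel-verified Lean document; each statement's English description precedes it below -/
import Mathlib

section
/- Let F be a field, let D be an associative F-algebra, and let τ : D → F be an additive map satisfying τ(xy) = τ(yx) for all x, y ∈ D. Let m ≥ 2, let Y = Σ_{i=1}^{m-1} E_{i,i+1} ∈ M_m(D), define Tr_τ(M) = τ(Σ_i M_{i,i}) and B_Y(A,B) = Tr_τ(Y(AB − BA)), and let c = {C ∈ M_m(D) : C_{i,m} = 0 for all i}. Then for all A, B ∈ c one has the identity B_Y(A,B) = Σ_{i=2}^{m-1} Σ_{k=1}^{m-1} τ(A_{i,k}(B_{k,i-1} − B_{k+1,i})) + Σ_{k=1}^{m-1} τ(A_{m,k} B_{k,m-1}) − Σ_{k=1}^{m-1} τ(A_{1,k} B_{k+1,1}). -/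
/-!
Since `Y` is the shift matrix, `Tr(Y M)` is the sum of the subdiagonal entries `M_{i+1,i}`.
For `M = AB - BA`, the trace property of `τ` turns `τ(B_{i+1,k} A_{k,i})` into
`τ(A_{k,i} B_{i+1,k})`; the vanishing last columns remove the terms with `k = m`, and after
reindexing (`i ↦ i + 1` in the first double sum, swapping the indices in the second) the two
double sums differ from the `i ∈ [2, m-1]` sums of the statement exactly by their boundary rows
`i = m` and `i = 1`.
-/

open Finset

namespace Matrix

variable {α : Type*}

/-- Entries indexed by `ℕ`, extended by zero, so that the index shifts `i ± 1` become plain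
arithmetic. -/
def natEntry [Zero α] {m n : ℕ} (M : Matrix (Fin m) (Fin n) α) (i j : ℕ) : α :=
  if h : i < m ∧ j < n then M ⟨i, h.1⟩ ⟨j, h.2⟩ else 0

section Zero

variable [Zero α] {m n : ℕ} (M : Matrix (Fin m) (Fin n) α)

theorem natEntry_of_lt {i j : ℕ} (hi : i < m) (hj : j < n) :
    natEntry M i j = M ⟨i, hi⟩ ⟨j, hj⟩ :=
  dif_pos ⟨hi, hj⟩

theorem apply_eq_natEntry (i : Fin m) (j : Fin n) : M i j = natEntry M i j :=
  (natEntry_of_lt M i.isLt j.isLt).symm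

theorem natEntry_of_le_left {i : ℕ} (hi : m ≤ i) (j : ℕ) : natEntry M i j = 0 :=
  dif_neg fun h => (h.1.trans_le hi).false

theorem natEntry_of_le_right (i : ℕ) {j : ℕ} (hj : n ≤ j) : natEntry M i j = 0 :=
  dif_neg fun h => (h.2.trans_le hj).false

theorem natEntry_col_eq_zero {j : Fin n} (h : ∀ i, M i j = 0) (i : ℕ) : natEntry M i j = 0 := by
  by_cases hi : i < m
  · rw [natEntry_of_lt M hi j.isLt]
    exact h _
  · exact natEntry_of_le_left M (not_lt.mp hi) j

end Zero

theorem natEntry_sub [AddGroup α] {m n : ℕ} (M N : Matrix (Fin m) (Fin n) α) (i j : ℕ) :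
    natEntry (M - N) i j = natEntry M i j - natEntry N i j := by
  unfold natEntry
  split_ifs <;> simp

theorem natEntry_mul [NonUnitalNonAssocSemiring α] {l m n : ℕ}
    (M : Matrix (Fin l) (Fin m) α) (N : Matrix (Fin m) (Fin n) α) (i j : ℕ) :
    natEntry (M * N) i j = ∑ k ∈ range m, natEntry M i k * natEntry N k j := by
  by_cases h : i < l ∧ j < n
  · rw [natEntry_of_lt _ h.1 h.2, mul_apply, ← Fin.sum_univ_eq_sum_range]
    simp only [apply_eq_natEntry]
  · rw [not_and_or, not_lt, not_lt] at h
    rcases h with hi | hj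
    · simp only [natEntry_of_le_left _ hi, zero_mul, sum_const_zero]
    · simp only [natEntry_of_le_right _ _ hj, mul_zero, sum_const_zero]

theorem sum_diag_shift_mul [NonAssocSemiring α] {m : ℕ} (Y M : Matrix (Fin m) (Fin m) α)
    (hY : ∀ i j : Fin m, Y i j = if (i : ℕ) + 1 = (j : ℕ) then 1 else 0) :
    ∑ i, (Y * M) i i = ∑ i ∈ range (m - 1), natEntry M (i + 1) i := by
  have hrow : ∀ i j : Fin m, (Y * M) i j = natEntry M (i + 1) j := by
    intro i j
    simp only [mul_apply, hY, ite_mul, one_mul, zero_mul, apply_eq_natEntry M]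
    rw [Fin.sum_univ_eq_sum_range (fun k => if (i : ℕ) + 1 = k then natEntry M k j else 0),
      sum_ite_eq, ite_eq_left_iff, mem_range, not_lt]
    exact fun hi => (natEntry_of_le_left M hi j).symm
  simp only [hrow]
  rw [Fin.sum_univ_eq_sum_range (fun i => natEntry M (i + 1) i)]
  obtain _ | n := m
  · rfl
  · rw [sum_range_succ, natEntry_of_le_left M le_rfl, add_zero, Nat.add_sub_cancel]

end Matrix


theorem map_sum_subdiag_commutator_eq {D F : Type*} [Ring D] [AddCommGroup F] (τ : D →+ F)
    (hτ : ∀ x y : D, τ (x * y) = τ (y * x)) (n : ℕ) (a b : ℕ → ℕ → D)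
    (ha : ∀ i, a i (n + 1) = 0) (hb : ∀ i, b i (n + 1) = 0) :
    τ (∑ i ∈ range (n + 1),
        (∑ k ∈ range (n + 2), a (i + 1) k * b k i -
          ∑ k ∈ range (n + 2), b (i + 1) k * a k i)) =
      ∑ i ∈ Ico 1 (n + 1), ∑ k ∈ range (n + 1), τ (a i k * (b k (i - 1) - b (k + 1) i))
        + ∑ k ∈ range (n + 1), τ (a (n + 1) k * b k n)
        - ∑ k ∈ range (n + 1), τ (a 0 k * b (k + 1) 0) := by
  have hab : ∀ i, ∑ k ∈ range (n + 2), a (i + 1) k * b k i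
      = ∑ k ∈ range (n + 1), a (i + 1) k * b k i := fun i => by
    rw [sum_range_succ, ha, zero_mul, add_zero]
  have hba : ∀ i, ∑ k ∈ range (n + 2), b (i + 1) k * a k i
      = ∑ k ∈ range (n + 1), b (i + 1) k * a k i := fun i => by
    rw [sum_range_succ, hb, zero_mul, add_zero]
  have hlower : ∑ i ∈ range (n + 1), ∑ k ∈ range (n + 1), τ (a (i + 1) k * b k i)
      = ∑ i ∈ Ico 1 (n + 1), ∑ k ∈ range (n + 1), τ (a i k * b k (i - 1))
        + ∑ k ∈ range (n + 1), τ (a (n + 1) k * b k n) := by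
    rw [sum_range_succ, sum_Ico_eq_sum_range, Nat.add_sub_cancel]
    simp only [add_comm 1, Nat.add_sub_cancel]
  have hupper : ∑ i ∈ range (n + 1), ∑ k ∈ range (n + 1), τ (b (i + 1) k * a k i)
      = ∑ i ∈ Ico 1 (n + 1), ∑ k ∈ range (n + 1), τ (a i k * b (k + 1) i)
        + ∑ k ∈ range (n + 1), τ (a 0 k * b (k + 1) 0) := by
    simp only [hτ (b _ _)]
    rw [sum_comm, sum_range_succ', sum_Ico_eq_sum_range, Nat.add_sub_cancel]
    simp only [add_comm 1]
  simp only [hab, hba, map_sum, map_sub, sum_sub_distrib, mul_sub, hlower, hupper]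
  abel

open Matrix in
/-- With `τ : D → F` additive satisfying `τ(xy) = τ(yx)`,
`m ≥ 2`, `Y = Σ_{i=1}^{m-1} E_{i,i+1}`, `B_Y(A,B) = Tr_τ(Y(AB - BA))` and
`c` the matrices with vanishing last column, for all `A, B ∈ c` one has
`B_Y(A,B) = Σ_{i=2}^{m-1} Σ_{k=1}^{m-1} τ(A_{i,k}(B_{k,i-1} − B_{k+1,i}))
  + Σ_{k=1}^{m-1} τ(A_{m,k} B_{k,m-1}) − Σ_{k=1}^{m-1} τ(A_{1,k} B_{k+1,1})`
(the sums below are written with 0-based indices). -/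
theorem generalized_local_coefficients_stmt6
    {F D : Type*} [Field F] [Ring D]
    (m : ℕ) (hm : 2 ≤ m)
    (τ : D →+ F) (hτ : ∀ x y : D, τ (x * y) = τ (y * x))
    (Y : Matrix (Fin m) (Fin m) D)
    (hY : ∀ i j : Fin m, Y i j = if (i : ℕ) + 1 = (j : ℕ) then 1 else 0)
    (A B : Matrix (Fin m) (Fin m) D)
    (hA : ∀ i : Fin m, A i ⟨m - 1, by omega⟩ = 0)
    (hB : ∀ i : Fin m, B i ⟨m - 1, by omega⟩ = 0) :
    τ (∑ i, (Y * (A * B - B * A)) i i) =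
      (∑ i ∈ (Finset.Ico 1 (m - 1)).attach, ∑ k ∈ (Finset.range (m - 1)).attach,
        τ (A ⟨i.1, by have := Finset.mem_Ico.mp i.2; omega⟩
             ⟨k.1, by have := Finset.mem_range.mp k.2; omega⟩ *
           (B ⟨k.1, by have := Finset.mem_range.mp k.2; omega⟩
              ⟨i.1 - 1, by have := Finset.mem_Ico.mp i.2; omega⟩ -
            B ⟨k.1 + 1, by have := Finset.mem_range.mp k.2; omega⟩
              ⟨i.1, by have := Finset.mem_Ico.mp i.2; omega⟩)))
      + (∑ k ∈ (Finset.range (m - 1)).attach,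
          τ (A ⟨m - 1, by omega⟩ ⟨k.1, by have := Finset.mem_range.mp k.2; omega⟩ *
             B ⟨k.1, by have := Finset.mem_range.mp k.2; omega⟩ ⟨m - 2, by omega⟩))
      - (∑ k ∈ (Finset.range (m - 1)).attach,
          τ (A ⟨0, by omega⟩ ⟨k.1, by have := Finset.mem_range.mp k.2; omega⟩ *
             B ⟨k.1 + 1, by have := Finset.mem_range.mp k.2; omega⟩ ⟨0, by omega⟩)) := by
  obtain ⟨n, rfl⟩ : ∃ n, m = n + 2 := ⟨m - 2, by omega⟩
  rw [sum_diag_shift_mul Y _ hY]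
  simp only [natEntry_sub, natEntry_mul, apply_eq_natEntry A, apply_eq_natEntry B,
    Nat.reduceSubDiff]
  rw [map_sum_subdiag_commutator_eq τ hτ n _ _ (natEntry_col_eq_zero A hA)
    (natEntry_col_eq_zero B hB)]
  simp only [← sum_attach (range (n + 1)), ← sum_attach (Ico 1 (n + 1))]
  -- the ranges inside `attach` still read `n + 2 - 1`, which agrees with `n + 1` by computation
  rfl
end

section
/- Let F be a field, let O ⊆ F be a subring, let D be an associative F-algebra, and let τ : D → F be an F-linear map with τ(xy) = τ(yx) for all x, y ∈ D. Let R ⊆ D be a subring and O-submodule which is self-dual with respect to τ, i.e. for all x ∈ D: (τ(xz) ∈ O for all z ∈ R) if and only if x ∈ R. Let m ≥ 1, Y = Σ_{i=1}^{m-1} E_{i,i+1} ∈ M_m(D), Tr_τ(M) = τ(Σ_i M_{i,i}), B_Y(A,B) = Tr_τ(Y(AB − BA)), and c = {C ∈ M_m(D) : C_{i,m} = 0 for all i}. Then the lattice M_m(R) ∩ c is self-dual in c with respect to B_Y: for every B ∈ c, one has B_Y(A,B) ∈ O for all A ∈ c with all entries in R if and only if all entries of B lie in R. -/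
/-!
Since `τ` is a trace form, `Y` can be moved across the trace: `B_Y(A, B) = Tr_τ(A [B, Y])`.
Testing against single-entry matrices of `c` and using the self-duality of `R`, the form
`B_Y(·, B)` is `O`-valued on `M_m(R) ∩ c` iff every row of `[B, Y]` except the last lies in `R`.
Those rows consist of the diagonal differences `B i j - B (i+1) (j+1)` and the first-column
entries `-B (i+1) 0`, so walking along the diagonals, up from the first column and down from the
vanishing last column, puts every entry of `B` in `R`.
-/

open Matrix

section TracePairing

variable {D M G : Type*} [Ring D] [AddCommGroup M] [FunLike G D M] [AddMonoidHomClass G D M]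
  {τ : G} (hτ : ∀ x y : D, τ (x * y) = τ (y * x))
include hτ

theorem map_trace_mul_comm {n p : Type*} [Fintype n] [Fintype p]
    (X : Matrix n p D) (Z : Matrix p n D) : τ (trace (X * Z)) = τ (trace (Z * X)) := by
  simp only [trace, diag, mul_apply, map_sum, hτ (X _ _)]
  exact Finset.sum_comm

theorem map_trace_mul_commutator {n : Type*} [Fintype n] (Y A B : Matrix n n D) :
    τ (trace (Y * (A * B - B * A))) = τ (trace (A * (B * Y - Y * B))) := by
  simp only [Matrix.mul_sub, trace_sub, map_sub]
  rw [map_trace_mul_comm hτ Y (A * B), Matrix.mul_assoc, ← Matrix.mul_assoc Y B A,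
    map_trace_mul_comm hτ (Y * B)]

end TracePairing

theorem map_trace_mul_mem_iff {D M G S : Type*} [Ring D] [FunLike G D M] [SetLike S M] {τ : G}
    (hτ : ∀ x y : D, τ (x * y) = τ (y * x)) {n : Type*} [Fintype n] [DecidableEq n]
    (O : S) (R : Subring D)
    (hself : ∀ x : D, (∀ z ∈ R, τ (x * z) ∈ O) ↔ x ∈ R) (l : n) (C : Matrix n n D) :
    (∀ A : Matrix n n D, (∀ i, A i l = 0) → (∀ i j, A i j ∈ R) →
        τ (trace (A * C)) ∈ O) ↔ ∀ i j, j ≠ l → C j i ∈ R := by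
  constructor
  · intro h i j hj
    refine (hself _).1 fun z hz => ?_
    have hA := h (single i j z) (fun k => single_apply_of_col_ne i k hj z)
      (fun a b => by by_cases hab : i = a ∧ j = b <;> simp [hab, hz])
    rwa [trace_single_mul, smul_eq_mul, hτ] at hA
  · intro hC A hAl hA
    have hmem : trace (A * C) ∈ R := by
      refine Subring.sum_mem _ fun i _ => Subring.sum_mem _ fun j _ => ?_
      by_cases hj : j = l
      · simp [hj, hAl]
      · exact R.mul_mem (hA i j) (hC i j hj)
    simpa using (hself _).2 hmem 1 R.one_mem

section Shift

variable {D : Type*} [NonAssocSemiring D] {n : ℕ} {Y : Matrix (Fin (n + 1)) (Fin (n + 1)) D}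
  (hY : ∀ i j : Fin (n + 1), Y i j = if (i : ℕ) + 1 = (j : ℕ) then 1 else 0)
include hY

theorem shift_mul_apply_castSucc (B : Matrix (Fin (n + 1)) (Fin (n + 1)) D) (i : Fin n)
    (j : Fin (n + 1)) : (Y * B) i.castSucc j = B i.succ j := by
  simp [mul_apply, hY, ← Fin.val_succ, Fin.val_inj]

theorem mul_shift_apply_zero (B : Matrix (Fin (n + 1)) (Fin (n + 1)) D) (i : Fin (n + 1)) :
    (B * Y) i 0 = 0 := by
  simp [mul_apply, hY]

theorem mul_shift_apply_succ (B : Matrix (Fin (n + 1)) (Fin (n + 1)) D) (i : Fin (n + 1))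
    (j : Fin n) : (B * Y) i j.succ = B i j.castSucc := by
  rw [mul_apply, Fintype.sum_eq_single j.castSucc fun k hk => by
    simp [hY, Fin.ext_iff] at hk ⊢; omega]
  simp [hY]

end Shift

section DiagonalDifferences

variable {G S : Type*} [AddCommGroup G] [SetLike S G] [AddSubgroupClass S G] {R : S} {n : ℕ}
  {B : Fin (n + 1) → Fin (n + 1) → G}
  (hstep : ∀ i j : Fin n, B i.castSucc j.castSucc - B i.succ j.succ ∈ R)
include hstep

theorem mem_of_lt_of_forall_succ_zero_mem (hzero : ∀ i : Fin n, B i.succ 0 ∈ R) :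
    ∀ i j, j < i → B i j ∈ R := by
  intro i j
  induction j using Fin.induction generalizing i with
  | zero =>
    intro hi
    obtain ⟨i, rfl⟩ := Fin.exists_succ_eq.2 (Fin.pos_iff_ne_zero.1 hi)
    exact hzero i
  | succ j ih =>
    intro hi
    obtain ⟨i, rfl⟩ := Fin.exists_succ_eq.2 (ne_of_gt (lt_of_le_of_lt (Fin.zero_le _) hi))
    have hprev : B i.castSucc j.castSucc ∈ R := ih _ (Fin.castSucc_lt_castSucc_iff.2
      (Fin.succ_lt_succ_iff.1 hi))
    simpa only [sub_sub_cancel] using sub_mem hprev (hstep i j)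

theorem mem_of_le_of_forall_last_mem (hlast : ∀ i, B i (Fin.last n) ∈ R) :
    ∀ i j, i ≤ j → B i j ∈ R := by
  intro i j
  induction j using Fin.reverseInduction generalizing i with
  | last => exact fun _ => hlast i
  | cast j ih =>
    intro hi
    obtain ⟨i, rfl⟩ :=
      Fin.exists_castSucc_eq.2 (ne_of_lt (lt_of_le_of_lt hi (Fin.castSucc_lt_last j)))
    have hnext : B i.succ j.succ ∈ R := ih _ (Fin.succ_le_succ_iff.2
      (Fin.castSucc_le_castSucc_iff.1 hi))
    simpa only [sub_add_cancel] using add_mem (hstep i j) hnext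

end DiagonalDifferences

theorem commutator_shift_mem_iff {D S : Type*} [Ring D] [SetLike S D] [AddSubgroupClass S D]
    {n : ℕ} {Y : Matrix (Fin (n + 1)) (Fin (n + 1)) D}
    (hY : ∀ i j : Fin (n + 1), Y i j = if (i : ℕ) + 1 = (j : ℕ) then 1 else 0) (R : S)
    {B : Matrix (Fin (n + 1)) (Fin (n + 1)) D} (hB : ∀ i, B i (Fin.last n) = 0) :
    (∀ i j, j ≠ Fin.last n → (B * Y - Y * B) j i ∈ R) ↔ ∀ i j, B i j ∈ R := by
  have hzero (i : Fin n) : (B * Y - Y * B) i.castSucc 0 = -B i.succ 0 := by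
    rw [Matrix.sub_apply, mul_shift_apply_zero hY, shift_mul_apply_castSucc hY, zero_sub]
  have hsucc (i j : Fin n) :
      (B * Y - Y * B) i.castSucc j.succ = B i.castSucc j.castSucc - B i.succ j.succ := by
    rw [Matrix.sub_apply, mul_shift_apply_succ hY, shift_mul_apply_castSucc hY]
  constructor
  · intro h
    have hstep (i j : Fin n) : B i.castSucc j.castSucc - B i.succ j.succ ∈ R :=
      hsucc i j ▸ h _ _ (Fin.castSucc_ne_last i)
    have hcol (i : Fin n) : B i.succ 0 ∈ R :=
      neg_mem_iff.1 (hzero i ▸ h _ _ (Fin.castSucc_ne_last i))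
    intro i j
    rcases lt_or_ge j i with hji | hij
    · exact mem_of_lt_of_forall_succ_zero_mem hstep hcol i j hji
    · exact mem_of_le_of_forall_last_mem hstep (fun i => hB i ▸ zero_mem R) i j hij
  · intro hBR j i hi
    obtain ⟨i, rfl⟩ := Fin.exists_castSucc_eq.2 hi
    cases j using Fin.cases with
    | zero => exact hzero i ▸ neg_mem (hBR _ _)
    | succ j => exact hsucc i j ▸ sub_mem (hBR _ _) (hBR _ _)

/-- Let `O ⊆ F` be a subring of the field `F`, `D` an
associative `F`-algebra, `τ : D → F` an `F`-linear map with `τ(xy) = τ(yx)`,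
and `R ⊆ D` a subring and `O`-submodule which is self-dual with respect to `τ`.
Let `m ≥ 1`, `Y = Σ_{i=1}^{m-1} E_{i,i+1}`, `B_Y(A,B) = Tr_τ(Y(AB − BA))` and
`c` the matrices with vanishing last column. Then the lattice `M_m(R) ∩ c` is
self-dual in `c` with respect to `B_Y`. -/
theorem generalized_local_coefficients_stmt7
    {F D : Type*} [Field F] [Ring D] [Algebra F D]
    (O : Subring F) (τ : D →ₗ[F] F) (hτ : ∀ x y : D, τ (x * y) = τ (y * x))
    (R : Subring D)
    (hself : ∀ x : D, (∀ z ∈ R, τ (x * z) ∈ O) ↔ x ∈ R)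
    (m : ℕ) (hm : 1 ≤ m)
    (Y : Matrix (Fin m) (Fin m) D)
    (hY : ∀ i j : Fin m, Y i j = if (i : ℕ) + 1 = (j : ℕ) then 1 else 0)
    (B : Matrix (Fin m) (Fin m) D)
    (hB : ∀ i : Fin m, B i ⟨m - 1, by omega⟩ = 0) :
    (∀ A : Matrix (Fin m) (Fin m) D,
        (∀ i : Fin m, A i ⟨m - 1, by omega⟩ = 0) → (∀ i j : Fin m, A i j ∈ R) →
          τ (∑ i, (Y * (A * B - B * A)) i i) ∈ O) ↔
      (∀ i j : Fin m, B i j ∈ R) := by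
  obtain ⟨n, rfl⟩ : ∃ n, m = n + 1 := ⟨m - 1, by omega⟩
  have hlast : (⟨n + 1 - 1, by omega⟩ : Fin (n + 1)) = Fin.last n := Fin.ext (by simp)
  rw [hlast] at hB ⊢
  have hpairing (A : Matrix (Fin (n + 1)) (Fin (n + 1)) D) :
      τ (∑ i, (Y * (A * B - B * A)) i i) = τ (trace (A * (B * Y - Y * B))) :=
    map_trace_mul_commutator hτ Y A B
  simp only [hpairing]
  rw [map_trace_mul_mem_iff hτ O R hself, commutator_shift_mem_iff hY R hB]
end
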